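/- arXiv:1907.00381 — 4 statements merged into one kernel-verified Lean document; each statement's English description precedes it below -/
import Mathlib

section
/- Let σ_1, σ_2, ... be independent exponential random variables where σ_i has rate λ̃_i = 17·i·√(log n). Then for all 0 < β < α < 1 and any c_3 > 0, for all sufficiently large n, P(Σ_{i=1}^{⌊n^α⌋} σ_i < 1) ≤ exp(-c_3·n^β). -/
/-!
Chernoff bound with `θ = c k`, where `c = 17 √(log n)` and `k = ⌈n ^ β⌉`. By the layer-cake
formula, an exponential variable of rate `c i` has `E[exp (-θ σᵢ)] = i / (i + k)`, and
`∏_{i ≤ m} i / (i + k) = m! k! / (m + k)! = ∏_{j ≤ k} j / (j + m) ≤ (k / m) ^ k`. Hence, with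
`m = ⌊n ^ α⌋`,
`P(∑ σᵢ < 1) ≤ exp (c k) (k / m) ^ k ≤ exp (k (17 √(log n) + log 4 - (α - β) log n))`,
and the linear term `(α - β) log n` beats `√(log n)`, giving `exp (-c₃ k) ≤ exp (-c₃ n ^ β)`.
-/

open MeasureTheory ProbabilityTheory Real Set Filter Finset
open scoped ENNReal Nat

section ExponentialTail

variable {Ω : Type*} [MeasurableSpace Ω] {μ : Measure Ω}

lemma intervalIntegral_mul_exp_neg_mul (θ x : ℝ) :
    ∫ t in 0..x, θ * exp (-θ * t) = 1 - exp (-θ * x) := by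
  have hderiv : ∀ t ∈ uIcc 0 x, HasDerivAt (fun t => -exp (-θ * t)) (θ * exp (-θ * t)) t := by
    intro t _
    have := (((hasDerivAt_id t).const_mul (-θ)).exp).fun_neg
    simp only [id, mul_one] at this
    exact this.congr_deriv (by ring)
  rw [intervalIntegral.integral_eq_sub_of_hasDerivAt hderiv
    (Continuous.intervalIntegrable (by fun_prop) _ _)]
  simp only [mul_zero, exp_zero]
  ring

lemma integral_Ioi_mul_exp_neg_mul {a : ℝ} (ha : 0 < a) (θ : ℝ) :
    ∫ t in Ioi 0, θ * exp (-a * t) = θ / a := by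
  rw [integral_const_mul, integral_exp_mul_Ioi (neg_lt_zero.mpr ha)]
  field_simp
  simp

lemma ae_nonneg_of_measure_le_eq_exp [IsProbabilityMeasure μ] {X : Ω → ℝ} (hX : Measurable X)
    {r : ℝ} (htail : ∀ t, 0 ≤ t → μ {ω | t ≤ X ω} = ENNReal.ofReal (exp (-r * t))) :
    ∀ᵐ ω ∂μ, 0 ≤ X ω := by
  rw [ae_iff_measure_eq (measurableSet_le measurable_const hX).nullMeasurableSet]
  simpa using htail 0 le_rfl

lemma integrable_exp_neg_mul_of_nonneg [IsFiniteMeasure μ] {X : Ω → ℝ} (hX : AEMeasurable X μ)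
    (h0 : ∀ᵐ ω ∂μ, 0 ≤ X ω) {θ : ℝ} (hθ : 0 ≤ θ) :
    Integrable (fun ω => exp (-θ * X ω)) μ := by
  refine (integrable_const (1 : ℝ)).mono' (by fun_prop) ?_
  filter_upwards [h0] with ω hω
  rw [Real.norm_eq_abs, abs_exp, exp_le_one_iff]
  nlinarith

lemma mgf_neg_eq_of_measure_le_eq_exp [IsProbabilityMeasure μ] {X : Ω → ℝ} (hX : Measurable X)
    {r θ : ℝ} (hr : 0 < r) (hθ : 0 ≤ θ)
    (htail : ∀ t, 0 ≤ t → μ {ω | t ≤ X ω} = ENNReal.ofReal (exp (-r * t))) :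
    mgf X μ (-θ) = r / (r + θ) := by
  have h0 := ae_nonneg_of_measure_le_eq_exp hX htail
  have h_layer :
      ∫⁻ ω, ENNReal.ofReal (1 - exp (-θ * X ω)) ∂μ = ENNReal.ofReal (θ / (r + θ)) := by
    calc ∫⁻ ω, ENNReal.ofReal (1 - exp (-θ * X ω)) ∂μ
        = ∫⁻ ω, ENNReal.ofReal (∫ t in 0..X ω, θ * exp (-θ * t)) ∂μ := by
          simp only [intervalIntegral_mul_exp_neg_mul]
      _ = ∫⁻ t in Ioi 0, μ {ω | t ≤ X ω} * ENNReal.ofReal (θ * exp (-θ * t)) :=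
          lintegral_comp_eq_lintegral_meas_le_mul μ h0 hX.aemeasurable
            (fun _ _ => Continuous.intervalIntegrable (by fun_prop) _ _)
            (ae_of_all _ fun t => by positivity)
      _ = ∫⁻ t in Ioi 0, ENNReal.ofReal (θ * exp (-(r + θ) * t)) := by
          refine setLIntegral_congr_fun measurableSet_Ioi fun t ht => ?_
          rw [htail t (le_of_lt ht), ← ENNReal.ofReal_mul (exp_pos _).le, mul_left_comm,
            ← exp_add]
          ring_nf
      _ = ENNReal.ofReal (θ / (r + θ)) := by
          rw [← integral_Ioi_mul_exp_neg_mul (by linarith) θ,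
            ofReal_integral_eq_lintegral_ofReal
              ((integrableOn_exp_mul_Ioi (by linarith) 0).const_mul θ)
              (ae_of_all _ fun t => by positivity)]
  have h_compl : ∫ ω, (1 - exp (-θ * X ω)) ∂μ = θ / (r + θ) := by
    rw [integral_eq_lintegral_of_nonneg_ae _ (by fun_prop), h_layer,
      ENNReal.toReal_ofReal (by positivity)]
    filter_upwards [h0] with ω hω
    exact sub_nonneg.mpr (exp_le_one_iff.mpr (by nlinarith))
  calc mgf X μ (-θ) = 1 - ∫ ω, (1 - exp (-θ * X ω)) ∂μ := by
        rw [integral_sub (integrable_const 1)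
          (integrable_exp_neg_mul_of_nonneg hX.aemeasurable h0 hθ)]
        simp [mgf]
    _ = r / (r + θ) := by
        rw [h_compl]
        field_simp
        ring

lemma measureReal_sum_le_le_exp_mul_prod {ι : Type*} {X : ι → Ω → ℝ}
    (hX : ∀ i, Measurable (X i)) (hindep : iIndepFun X μ) {s : Finset ι} {r : ι → ℝ}
    (hr : ∀ i ∈ s, 0 < r i)
    (htail : ∀ i ∈ s, ∀ t, 0 ≤ t → μ {ω | t ≤ X i ω} = ENNReal.ofReal (exp (-r i * t)))
    {θ : ℝ} (hθ : 0 ≤ θ) (ε : ℝ) :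
    μ.real {ω | ∑ i ∈ s, X i ω ≤ ε} ≤ exp (θ * ε) * ∏ i ∈ s, r i / (r i + θ) := by
  have := hindep.isProbabilityMeasure
  have h_int : Integrable (fun ω => exp (-θ * (∑ i ∈ s, X i) ω)) μ :=
    hindep.integrable_exp_mul_sum hX fun i hi =>
      integrable_exp_neg_mul_of_nonneg (hX i).aemeasurable
        (ae_nonneg_of_measure_le_eq_exp (hX i) (htail i hi)) hθ
  calc μ.real {ω | ∑ i ∈ s, X i ω ≤ ε}
      ≤ exp (-(-θ) * ε) * mgf (∑ i ∈ s, X i) μ (-θ) := by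
        simpa only [Finset.sum_apply] using measure_le_le_exp_mul_mgf ε (by linarith) h_int
    _ = exp (θ * ε) * ∏ i ∈ s, r i / (r i + θ) := by
        rw [hindep.mgf_sum hX, neg_neg]
        congr 1
        exact prod_congr rfl fun i hi =>
          mgf_neg_eq_of_measure_le_eq_exp (hX i) (hr i hi) hθ (htail i hi)

end ExponentialTail

lemma prod_Icc_div_add_mul_factorial (m k : ℕ) :
    (∏ i ∈ Icc 1 m, (i : ℝ) / (i + k)) * (m + k)! = m ! * k ! := by
  induction m with
  | zero => simp
  | succ m ih =>
    rw [prod_Icc_succ_top (by omega), show m + 1 + k = (m + k) + 1 by omega, Nat.factorial_succ,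
      Nat.factorial_succ]
    have hpos : (0 : ℝ) < m + 1 + k := by positivity
    push_cast
    rw [mul_assoc ((m : ℝ) + 1), ← ih]
    field_simp
    ring

lemma prod_Icc_div_add_comm (m k : ℕ) :
    ∏ i ∈ Icc 1 m, (i : ℝ) / (i + k) = ∏ j ∈ Icc 1 k, (j : ℝ) / (j + m) := by
  have h := (prod_Icc_div_add_mul_factorial m k).trans
    ((mul_comm _ _).trans (prod_Icc_div_add_mul_factorial k m).symm)
  rw [add_comm k m] at h
  exact mul_right_cancel₀ (by positivity) h

lemma prod_Icc_div_add_le {m : ℕ} (hm : 1 ≤ m) (k : ℕ) :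
    ∏ i ∈ Icc 1 m, (i : ℝ) / (i + k) ≤ ((k : ℝ) / m) ^ k := by
  rw [prod_Icc_div_add_comm]
  calc ∏ j ∈ Icc 1 k, (j : ℝ) / (j + m) ≤ ∏ _j ∈ Icc 1 k, (k : ℝ) / m := by
        refine prod_le_prod (fun _ _ => by positivity) fun j hj => ?_
        have hjk : (j : ℝ) ≤ k := by exact_mod_cast (mem_Icc.mp hj).2
        have hm' : (1 : ℝ) ≤ m := by exact_mod_cast hm
        rw [div_le_div_iff₀ (by positivity) (by positivity)]
        nlinarith
    _ = ((k : ℝ) / m) ^ k := by simp [div_pow]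

lemma measure_sum_Icc_lt_one_le {Ω : Type*} [MeasurableSpace Ω] {μ : Measure Ω}
    {σ : ℕ → Ω → ℝ} (hσ : ∀ i, Measurable (σ i)) (hindep : iIndepFun σ μ) {c : ℝ} (hc : 0 < c)
    (htail : ∀ i : ℕ, 1 ≤ i → ∀ t : ℝ, 0 ≤ t →
      μ {ω | t ≤ σ i ω} = ENNReal.ofReal (exp (-(c * i) * t)))
    {m : ℕ} (hm : 1 ≤ m) (k : ℕ) :
    μ {ω | ∑ i ∈ Icc 1 m, σ i ω < 1} ≤ ENNReal.ofReal (exp (c * k) * ((k : ℝ) / m) ^ k) := by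
  have hchernoff := measureReal_sum_le_le_exp_mul_prod hσ hindep (s := Icc 1 m)
    (fun i hi => mul_pos hc (Nat.cast_pos.mpr (mem_Icc.mp hi).1))
    (fun i hi => htail i (mem_Icc.mp hi).1) (θ := c * k) (by positivity) 1
  have hratio : ∏ i ∈ Icc 1 m, c * i / (c * i + c * k) = ∏ i ∈ Icc 1 m, (i : ℝ) / (i + k) :=
    prod_congr rfl fun i _ => by rw [← mul_add, mul_div_mul_left _ _ hc.ne']
  have := hindep.isProbabilityMeasure
  calc μ {ω | ∑ i ∈ Icc 1 m, σ i ω < 1} ≤ μ {ω | ∑ i ∈ Icc 1 m, σ i ω ≤ 1} :=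
        measure_mono (ofPred_subset_ofPred.mpr fun _ => le_of_lt)
    _ = ENNReal.ofReal (μ.real {ω | ∑ i ∈ Icc 1 m, σ i ω ≤ 1}) :=
        (ofReal_measureReal (measure_ne_top _ _)).symm
    _ ≤ ENNReal.ofReal (exp (c * k) * ((k : ℝ) / m) ^ k) := by
        refine ENNReal.ofReal_le_ofReal (hchernoff.trans ?_)
        rw [mul_one, hratio]
        gcongr
        exact prod_Icc_div_add_le hm k

lemma eventually_mul_sqrt_add_le_mul {a : ℝ} (ha : 0 < a) (b C : ℝ) :
    ∀ᶠ L in atTop, b * √L + C ≤ a * L := by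
  filter_upwards [tendsto_sqrt_atTop.eventually_ge_atTop ((|b| + |C|) / a + 1),
    eventually_ge_atTop 0] with L hsqrt hL
  have hbC : |b| + |C| ≤ a * √L - a := by
    rw [div_add_one ha.ne', div_le_iff₀ ha] at hsqrt
    linarith
  have hL_eq : √L * √L = L := mul_self_sqrt hL
  have h1 : 1 ≤ √L := by
    have : 0 ≤ (|b| + |C|) / a := by positivity
    linarith
  nlinarith [le_abs_self b, le_abs_self C, abs_nonneg b, abs_nonneg C]

lemma eventually_exp_mul_div_pow_le {α β : ℝ} (hβ : 0 < β) (hβα : β < α) (b : ℝ) {c : ℝ}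
    (hc : 0 ≤ c) :
    ∀ᶠ x : ℝ in atTop,
      exp (b * √(log x) * ⌈x ^ β⌉₊) * ((⌈x ^ β⌉₊ : ℝ) / ⌊x ^ α⌋₊) ^ ⌈x ^ β⌉₊
        ≤ exp (-c * x ^ β) := by
  filter_upwards [eventually_gt_atTop 0, (tendsto_rpow_atTop hβ).eventually_ge_atTop 1,
    (tendsto_rpow_atTop (hβ.trans hβα)).eventually_ge_atTop 2,
    tendsto_log_atTop.eventually (eventually_mul_sqrt_add_le_mul (sub_pos.2 hβα) b (log 4 + c))]
    with x hx hxβ hxα hL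
  set k := ⌈x ^ β⌉₊
  set m := ⌊x ^ α⌋₊
  have hk_ge : x ^ β ≤ k := Nat.le_ceil _
  have hk_le : (k : ℝ) ≤ 2 * x ^ β :=
    (Nat.ceil_lt_add_one (by positivity)).le.trans (by linarith)
  have hm_ge : x ^ α / 2 ≤ m := by linarith [Nat.sub_one_lt_floor (x ^ α)]
  have hratio : (k : ℝ) / m ≤ exp (log 4 + (β - α) * log x) := by
    rw [exp_add, exp_log (by norm_num), mul_comm (β - α), ← rpow_def_of_pos hx, rpow_sub hx]
    calc (k : ℝ) / m ≤ 2 * x ^ β / (x ^ α / 2) := by gcongr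
      _ = 4 * (x ^ β / x ^ α) := by ring
  calc exp (b * √(log x) * k) * ((k : ℝ) / m) ^ k
      ≤ exp (b * √(log x) * k) * exp (log 4 + (β - α) * log x) ^ k := by gcongr
    _ = exp (k * (b * √(log x) + log 4 + (β - α) * log x)) := by
        rw [← exp_nat_mul, ← exp_add]; ring_nf
    _ ≤ exp (k * (-c)) :=
        exp_le_exp.mpr (mul_le_mul_of_nonneg_left (by linarith) (Nat.cast_nonneg k))
    _ ≤ exp (-c * x ^ β) := exp_le_exp.mpr (by nlinarith)

theorem stmt4_general (α β c₃ : ℝ) (hβ : 0 < β) (hβα : β < α) (hc₃ : 0 < c₃) :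
    ∃ N : ℕ, ∀ n : ℕ, N ≤ n →
      ∀ (Ω : Type) [MeasurableSpace Ω] (μ : Measure Ω), IsProbabilityMeasure μ →
        ∀ σ : ℕ → Ω → ℝ, (∀ i, Measurable (σ i)) →
          iIndepFun σ μ →
          (∀ i : ℕ, 1 ≤ i → ∀ t : ℝ, 0 ≤ t →
            μ {ω | t ≤ σ i ω}
              = ENNReal.ofReal (Real.exp (-(17 * (i : ℝ) * Real.sqrt (Real.log n)) * t))) →
          μ {ω | ∑ i ∈ Finset.Icc 1 ⌊(n : ℝ) ^ α⌋₊, σ i ω < 1}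
            ≤ ENNReal.ofReal (Real.exp (-c₃ * (n : ℝ) ^ β)) := by
  have h_log_pos : ∀ᶠ x : ℝ in atTop, 0 < log x := tendsto_log_atTop.eventually_gt_atTop 0
  have h_floor_pos : ∀ᶠ x : ℝ in atTop, 1 ≤ ⌊x ^ α⌋₊ :=
    ((tendsto_rpow_atTop (hβ.trans hβα)).eventually_ge_atTop 1).mono
      fun _ => (Nat.one_le_floor_iff _).mpr
  obtain ⟨N, hN⟩ := eventually_atTop.mp (tendsto_natCast_atTop_atTop.eventually
    (h_log_pos.and (h_floor_pos.and (eventually_exp_mul_div_pow_le hβ hβα 17 hc₃.le))))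
  refine ⟨N, fun n hn Ω _ μ _ σ hσ hindep htail => ?_⟩
  obtain ⟨hlog, hm, hbound⟩ := hN n hn
  calc μ {ω | ∑ i ∈ Icc 1 ⌊(n : ℝ) ^ α⌋₊, σ i ω < 1}
      ≤ ENNReal.ofReal (exp (17 * √(log n) * ⌈(n : ℝ) ^ β⌉₊)
          * ((⌈(n : ℝ) ^ β⌉₊ : ℝ) / ⌊(n : ℝ) ^ α⌋₊) ^ ⌈(n : ℝ) ^ β⌉₊) :=
        measure_sum_Icc_lt_one_le hσ hindep (by positivity)
          (fun i hi t ht => by rw [htail i hi t ht]; ring_nf) hm _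
    _ ≤ ENNReal.ofReal (exp (-c₃ * (n : ℝ) ^ β)) := ENNReal.ofReal_le_ofReal hbound

/-- Let `σ₁, σ₂, …` be independent exponential random variables where
`σ_i` has rate `17·i·√(log n)`. Then for all `0 < β < α < 1` and any `c₃ > 0`, for
all sufficiently large `n`, `P(∑_{i=1}^{⌊n^α⌋} σ_i < 1) ≤ exp(-c₃ n^β)`. -/
theorem stmt4 (α β c₃ : ℝ) (hβ : 0 < β) (hβα : β < α) (hα : α < 1) (hc₃ : 0 < c₃) :
    ∃ N : ℕ, ∀ n : ℕ, N ≤ n →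
      ∀ (Ω : Type) [MeasurableSpace Ω] (μ : Measure Ω), IsProbabilityMeasure μ →
        ∀ σ : ℕ → Ω → ℝ, (∀ i, Measurable (σ i)) →
          iIndepFun σ μ →
          (∀ i : ℕ, 1 ≤ i → ∀ t : ℝ, 0 ≤ t →
            μ {ω | t ≤ σ i ω}
              = ENNReal.ofReal (Real.exp (-(17 * (i : ℝ) * Real.sqrt (Real.log n)) * t))) →
          μ {ω | ∑ i ∈ Finset.Icc 1 ⌊(n : ℝ) ^ α⌋₊, σ i ω < 1}
            ≤ ENNReal.ofReal (Real.exp (-c₃ * (n : ℝ) ^ β)) :=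
  stmt4_general α β c₃ hβ hβα hc₃
end

section
/- Let H_{B,N} denote the N-level stationary harmonic measure. For connected sets V̄, Ṽ ⊆ H containing L_0, and any directed boundary edge e⃗ = x → y with x ∈ V̄ ∩ Ṽ and y ∉ V̄ ∪ Ṽ, one has |H_{V̄}(e⃗) − H_{Ṽ}(e⃗)| ≤ H_{V̄ ∩ Ṽ}(e⃗) − H_{V̄ ∪ Ṽ}(e⃗). -/
open MeasureTheory Filter Set
open scoped ENNReal Classical

/-- Lattice sites of `ℤ²`. -/
abbrev Site := ℤ × ℤ

/-- Nearest-neighbor adjacency in `ℤ²` (ℓ¹-distance one). -/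
def adjSite (a b : Site) : Prop := |b.1 - a.1| + |b.2 - a.2| = 1

/-- The horizontal line `L_k = ℤ × {k}`. -/
def Line (k : ℤ) : Set Site := {p | p.2 = k}

/-- The upper half-plane `H = {(x,y) : y ≥ 0}` (including the x-axis). -/
def UH : Set Site := {p | 0 ≤ p.2}

/-- `P` is the family of laws of a simple random walk `S` on `ℤ²` indexed by the
starting point: the probability of following any prescribed nearest-neighbor
trajectory of length `n` from the start is `(1/4)^n`, and `0` for non-admissible
trajectories. -/
def IsSRW {Ω : Type*} [MeasurableSpace Ω] (P : Site → Measure Ω) (S : ℕ → Ω → Site) : Prop :=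
  (∀ z, IsProbabilityMeasure (P z)) ∧
  ∀ z : Site, ∀ n : ℕ, ∀ f : ℕ → Site, f 0 = z →
    P z {ω | ∀ m ≤ n, S m ω = f m} =
      if ∀ m < n, adjSite (f m) (f (m + 1)) then ((1 : ℝ≥0∞) / 4) ^ n else 0

/-- The walk first enters `A` at time `n`. -/
def FirstHitAt {Ω : Type*} (S : ℕ → Ω → Site) (A : Set Site) (n : ℕ) (ω : Ω) : Prop :=
  S n ω ∈ A ∧ ∀ m < n, S m ω ∉ A

/-- The event `{τ_A < τ_B}`: the walk hits `A` at some positive time, without having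
visited `B` at any positive time up to that moment. -/
def HitsBefore {Ω : Type*} (S : ℕ → Ω → Site) (A B : Set Site) (ω : Ω) : Prop :=
  ∃ k : ℕ, 1 ≤ k ∧ S k ω ∈ A ∧ ∀ m : ℕ, 1 ≤ m → m ≤ k → S m ω ∉ B

/-- `N`-level stationary harmonic measure of a point `x ∈ B`:
`H_{B,N}(x) = ∑_{z ∈ L_N \ B} P_z(S_{τ̄_{B∪L₀}} = x)`. -/
noncomputable def HpointN {Ω : Type*} [MeasurableSpace Ω] (P : Site → Measure Ω)
    (S : ℕ → Ω → Site) (B : Set Site) (N : ℤ) (x : Site) : ℝ≥0∞ :=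
  ∑' z : ↥(Line N \ B),
    P z {ω | ∃ n : ℕ, FirstHitAt S (B ∪ Line 0) n ω ∧ S n ω = x}

/-- `N`-level stationary harmonic measure of a directed edge `e = x → y` with `x ∈ B`:
`H_{B,N}(e) = ∑_{z ∈ L_N \ B} P_z(S_{τ̄_{B∪L₀}} = x, S_{τ̄_{B∪L₀}-1} = y)`. -/
noncomputable def HedgeN {Ω : Type*} [MeasurableSpace Ω] (P : Site → Measure Ω)
    (S : ℕ → Ω → Site) (B : Set Site) (N : ℤ) (e : Site × Site) : ℝ≥0∞ :=
  ∑' z : ↥(Line N \ B),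
    P z {ω | ∃ n : ℕ, 1 ≤ n ∧ FirstHitAt S (B ∪ Line 0) n ω ∧
      S n ω = e.1 ∧ S (n - 1) ω = e.2}

/-- Stationary harmonic measure of an edge, `H_B(e) = lim_{N→∞} H_{B,N}(e)`
(realized as a `limsup`; the limit exists by Proposition 1 of [PZ19]). -/
noncomputable def HedgeLim {Ω : Type*} [MeasurableSpace Ω] (P : Site → Measure Ω)
    (S : ℕ → Ω → Site) (B : Set Site) (e : Site × Site) : ℝ≥0∞ :=
  Filter.limsup (fun N : ℕ => HedgeN P S B (N : ℤ) e) atTop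

/-- Stationary harmonic measure of a point, `H_B(x) = lim_{N→∞} H_{B,N}(x)`. -/
noncomputable def HpointLim {Ω : Type*} [MeasurableSpace Ω] (P : Site → Measure Ω)
    (S : ℕ → Ω → Site) (B : Set Site) (x : Site) : ℝ≥0∞ :=
  Filter.limsup (fun N : ℕ => HpointN P S B (N : ℤ) x) atTop

/-- `B` is connected as a subset of the nearest-neighbor lattice. -/
def SetConnected (B : Set Site) : Prop :=
  ∀ x ∈ B, ∀ y ∈ B, ∃ k : ℕ, ∃ f : ℕ → Site, f 0 = x ∧ f k = y ∧
    (∀ i < k, adjSite (f i) (f (i + 1))) ∧ ∀ i ≤ k, f i ∈ B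

/-! Enlarging `B` (with `e.1 ∈ B` fixed) removes starting points from `L_N \ B` and adds
obstacles before the walk can enter through `e`, so every `H_{B,N}(e)` is antitone in `B`.
Hence both `H_{V̄}(e)` and `H_{Ṽ}(e)` lie between `H_{V̄ ∪ Ṽ}(e)` and `H_{V̄ ∩ Ṽ}(e)`. -/

lemma FirstHitAt.of_subset {Ω : Type*} {S : ℕ → Ω → Site} {A A' : Set Site} {n : ℕ} {ω : Ω}
    (h : FirstHitAt S A' n ω) (hAA' : A ⊆ A') (hn : S n ω ∈ A) : FirstHitAt S A n ω :=
  ⟨hn, fun m hm hmA => h.2 m hm (hAA' hmA)⟩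

def EntersThroughEdge {Ω : Type*} (S : ℕ → Ω → Site) (B : Set Site) (e : Site × Site) :
    Set Ω :=
  {ω | ∃ n : ℕ, 1 ≤ n ∧ FirstHitAt S (B ∪ Line 0) n ω ∧ S n ω = e.1 ∧ S (n - 1) ω = e.2}

lemma entersThroughEdge_mono {Ω : Type*} {S : ℕ → Ω → Site} {B B' : Set Site} (hBB' : B ⊆ B')
    {e : Site × Site} (he : e.1 ∈ B) : EntersThroughEdge S B' e ⊆ EntersThroughEdge S B e := by
  rintro ω ⟨n, hn, hfirst, hx, hy⟩
  exact ⟨n, hn, hfirst.of_subset (union_subset_union_left _ hBB') (hx ▸ Or.inl he), hx, hy⟩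

lemma hedgeN_le_of_subset {Ω : Type*} [MeasurableSpace Ω] (P : Site → Measure Ω)
    (S : ℕ → Ω → Site) {B B' : Set Site} (hBB' : B ⊆ B') (N : ℤ) {e : Site × Site}
    (he : e.1 ∈ B) : HedgeN P S B' N e ≤ HedgeN P S B N e :=
  calc HedgeN P S B' N e = ∑' z : ↥(Line N \ B'), P z (EntersThroughEdge S B' e) := rfl
    _ ≤ ∑' z : ↥(Line N \ B'), P z (EntersThroughEdge S B e) :=
        ENNReal.tsum_le_tsum fun _ => measure_mono (entersThroughEdge_mono hBB' he)
    _ ≤ ∑' z : ↥(Line N \ B), P z (EntersThroughEdge S B e) :=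
        ENNReal.tsum_mono_subtype (fun z => P z _) (sdiff_subset_sdiff_right hBB')

lemma le_of_tendsto_hedgeN {Ω : Type*} [MeasurableSpace Ω] {P : Site → Measure Ω}
    {S : ℕ → Ω → Site} {B B' : Set Site} (hBB' : B ⊆ B') {e : Site × Site} (he : e.1 ∈ B)
    {a a' : ℝ≥0∞} (ha : Tendsto (fun N : ℕ => HedgeN P S B (N : ℤ) e) atTop (nhds a))
    (ha' : Tendsto (fun N : ℕ => HedgeN P S B' (N : ℤ) e) atTop (nhds a')) : a' ≤ a :=
  le_of_tendsto_of_tendsto' ha' ha fun N => hedgeN_le_of_subset P S hBB' N he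

theorem stmt8_general {Ω : Type*} [MeasurableSpace Ω] (P : Site → Measure Ω) (S : ℕ → Ω → Site)
    (Vb Vt : Set Site)
    (e : Site × Site) (hx : e.1 ∈ Vb ∩ Vt)
    (a b c d : ℝ≥0∞)
    (ha : Tendsto (fun N : ℕ => HedgeN P S Vb (N : ℤ) e) atTop (nhds a))
    (hb : Tendsto (fun N : ℕ => HedgeN P S Vt (N : ℤ) e) atTop (nhds b))
    (hc : Tendsto (fun N : ℕ => HedgeN P S (Vb ∩ Vt) (N : ℤ) e) atTop (nhds c))
    (hd : Tendsto (fun N : ℕ => HedgeN P S (Vb ∪ Vt) (N : ℤ) e) atTop (nhds d)) :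
    (a - b) ⊔ (b - a) ≤ c - d := by
  have hac : a ≤ c := le_of_tendsto_hedgeN inter_subset_left hx hc ha
  have hbc : b ≤ c := le_of_tendsto_hedgeN inter_subset_right hx hc hb
  have hda : d ≤ a := le_of_tendsto_hedgeN subset_union_left hx.1 ha hd
  have hdb : d ≤ b := le_of_tendsto_hedgeN subset_union_right hx.2 hb hd
  exact sup_le (tsub_le_tsub hac hdb) (tsub_le_tsub hbc hda)

/-- For connected sets `V̄, Ṽ ⊆ H` containing `L₀` and a directed
boundary edge `e = x → y` with `x ∈ V̄ ∩ Ṽ` and `y ∉ V̄ ∪ Ṽ`, the stationary harmonic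
measures (the limits `a, b, c, d` of the `N`-level measures for `V̄, Ṽ, V̄ ∩ Ṽ, V̄ ∪ Ṽ`)
satisfy `|a − b| ≤ c − d`. -/
theorem stmt8 {Ω : Type*} [MeasurableSpace Ω] (P : Site → Measure Ω) (S : ℕ → Ω → Site)
    (hS : IsSRW P S) (Vb Vt : Set Site) (hVbU : Vb ⊆ UH) (hVtU : Vt ⊆ UH)
    (hcb : SetConnected Vb) (hct : SetConnected Vt)
    (hLb : Line 0 ⊆ Vb) (hLt : Line 0 ⊆ Vt)
    (e : Site × Site) (hx : e.1 ∈ Vb ∩ Vt) (hy : e.2 ∉ Vb ∪ Vt) (hyU : e.2 ∈ UH)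
    (hadj : adjSite e.1 e.2)
    (a b c d : ℝ≥0∞)
    (ha : Tendsto (fun N : ℕ => HedgeN P S Vb (N : ℤ) e) atTop (nhds a))
    (hb : Tendsto (fun N : ℕ => HedgeN P S Vt (N : ℤ) e) atTop (nhds b))
    (hc : Tendsto (fun N : ℕ => HedgeN P S (Vb ∩ Vt) (N : ℤ) e) atTop (nhds c))
    (hd : Tendsto (fun N : ℕ => HedgeN P S (Vb ∪ Vt) (N : ℤ) e) atTop (nhds d)) :
    (a - b) ⊔ (b - a) ≤ c - d :=
  stmt8_general P S Vb Vt e hx a b c d ha hb hc hd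
end

section
/- Combining the path-counting bound and the exponential sum bound: P(‖I^0_1‖_2 ≥ k) ≤ 4^k · P(Σ_{i=1}^k T_i < 1) ≤ 4^k · e^{−c̃ k} ≤ e^{−Ck} for any prescribed C, provided c̃ = C + log 4 + 1, for all sufficiently large k. -/
open MeasureTheory Filter
open scoped ENNReal

lemma pow_mul_exp_neg_le_exp_neg {a C δ : ℝ} (ha : 0 < a) (hδ : 0 ≤ δ) (k : ℕ) :
    a ^ k * Real.exp (-(C + Real.log a + δ) * k) ≤ Real.exp (-C * k) := by
  have hpow : a ^ k = Real.exp (k * Real.log a) := by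
    rw [← Real.rpow_natCast, Real.rpow_def_of_pos ha, mul_comm]
  rw [hpow, ← Real.exp_add, Real.exp_le_exp]
  nlinarith [Nat.cast_nonneg (α := ℝ) k]

theorem stmt17_general {Ω Ω' : Type*} [MeasurableSpace Ω] [MeasurableSpace Ω']
    (μ : Measure Ω) (μ' : Measure Ω')
    (I : Ω → Set Site) (T : ℕ → Ω' → ℝ) (C : ℝ)
    (h1 : ∀ k : ℕ, μ {ω | ∃ y ∈ I ω, (k : ℝ) ≤ Real.sqrt ((y.1 : ℝ) ^ 2 + (y.2 : ℝ) ^ 2)}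
        ≤ 4 ^ k * μ' {ω' | ∑ i ∈ Finset.Icc 1 k, T i ω' < 1})
    (h2 : ∀ᶠ k : ℕ in atTop, μ' {ω' | ∑ i ∈ Finset.Icc 1 k, T i ω' < 1}
        ≤ ENNReal.ofReal (Real.exp (-(C + Real.log 4 + 1) * k))) :
    ∀ᶠ k : ℕ in atTop,
      μ {ω | ∃ y ∈ I ω, (k : ℝ) ≤ Real.sqrt ((y.1 : ℝ) ^ 2 + (y.2 : ℝ) ^ 2)}
        ≤ ENNReal.ofReal (Real.exp (-C * k)) := by
  filter_upwards [h2] with k hk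
  calc _ ≤ 4 ^ k * μ' {ω' | ∑ i ∈ Finset.Icc 1 k, T i ω' < 1} := h1 k
    _ ≤ 4 ^ k * ENNReal.ofReal (Real.exp (-(C + Real.log 4 + 1) * k)) := by gcongr
    _ = ENNReal.ofReal ((4 : ℝ) ^ k * Real.exp (-(C + Real.log 4 + 1) * k)) := by
        rw [ENNReal.ofReal_mul (by positivity), ENNReal.ofReal_pow (by norm_num)]
        norm_num
    _ ≤ ENNReal.ofReal (Real.exp (-C * k)) :=
        ENNReal.ofReal_le_ofReal (pow_mul_exp_neg_le_exp_neg (by norm_num) zero_le_one k)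

/-- Combining the path-counting bound and the exponential-sum bound:
if `P(‖I^0_1‖₂ ≥ k) ≤ 4^k · P(∑_{i=1}^k T_i < 1)` for all `k`, and
`P(∑_{i=1}^k T_i < 1) ≤ e^{−c̃ k}` with `c̃ = C + log 4 + 1` for all large `k`, then
`P(‖I^0_1‖₂ ≥ k) ≤ e^{−Ck}` for all sufficiently large `k`. -/
theorem stmt17 {Ω Ω' : Type*} [MeasurableSpace Ω] [MeasurableSpace Ω']
    (μ : Measure Ω) [IsProbabilityMeasure μ] (μ' : Measure Ω') [IsProbabilityMeasure μ']
    (I : Ω → Set Site) (T : ℕ → Ω' → ℝ) (C : ℝ) (hC : 0 < C)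
    (h1 : ∀ k : ℕ, μ {ω | ∃ y ∈ I ω, (k : ℝ) ≤ Real.sqrt ((y.1 : ℝ) ^ 2 + (y.2 : ℝ) ^ 2)}
        ≤ 4 ^ k * μ' {ω' | ∑ i ∈ Finset.Icc 1 k, T i ω' < 1})
    (h2 : ∀ᶠ k : ℕ in atTop, μ' {ω' | ∑ i ∈ Finset.Icc 1 k, T i ω' < 1}
        ≤ ENNReal.ofReal (Real.exp (-(C + Real.log 4 + 1) * k))) :
    ∀ᶠ k : ℕ in atTop,
      μ {ω | ∃ y ∈ I ω, (k : ℝ) ≤ Real.sqrt ((y.1 : ℝ) ^ 2 + (y.2 : ℝ) ^ 2)}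
        ≤ ENNReal.ofReal (Real.exp (-C * k)) :=
  stmt17_general μ μ' I T C h1 h2
end

section
/- Let (Ω, P) carry a measure-preserving ℤ-action (translations) and a random set A_t^∞, and suppose: for finite K_1, K_2 ⊆ H at horizontal distance > 2n, the approximating events C_i = {A_t^n(i) ∩ K_i = ξ_i} built from Poisson processes in disjoint spatial regions are independent conditionally on the confinement events D_i, with P(D_1^c ∪ D_2^c) → 0 and P(B_i △ C_i) → 0 as n → ∞, where B_i = {A_t^∞ ∩ K_i = ξ_i}. Then lim_{n→∞} P(B_1 ∩ (B_2 shifted by 2n)) = P(B_1)·P(B_2), i.e. A_t^∞ is strongly mixing, hence ergodic, under integer horizontal translations. -/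
/-!
Put `E n = D₁ n ∩ D₂ n`. Since `P(Eᶜ) → 0`, the events `C₁ n ∩ E n` and `C₂ n ∩ E n` approximate
`B₁` and `θ^{-2n} B₂` in measure, and their intersection approximates `B₁ ∩ θ^{-2n} B₂`.
Conditional independence on `E n` gives
`P(C₁ ∩ C₂ ∩ E) · P(E) = P(C₁ ∩ E) · P(C₂ ∩ E)`, where the right side tends to
`P(B₁) · P(θ^{-2n} B₂) = P(B₁) · P(B₂)` by stationarity, and `P(E) → 1`.
-/

open MeasureTheory Filter Topology
open scoped ENNReal symmDiff

namespace Set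

variable {α : Type*}

theorem symmDiff_inter_subset (s t u : Set α) : s ∆ (t ∩ u) ⊆ s ∆ t ∪ uᶜ := by
  intro x
  simp only [mem_symmDiff, mem_inter_iff, mem_union, mem_compl_iff]
  tauto

theorem inter_symmDiff_inter_subset (s t u v : Set α) :
    (s ∩ t) ∆ (u ∩ v) ⊆ s ∆ u ∪ t ∆ v := by
  intro x
  simp only [mem_symmDiff, mem_inter_iff, mem_union]
  tauto

end Set

namespace MeasureTheory

variable {α ι : Type*} [MeasurableSpace α] {μ : Measure α} {l : Filter ι}

theorem tendsto_measure_zero_of_subset_union {s t u : ι → Set α} (h : ∀ i, s i ⊆ t i ∪ u i)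
    (ht : Tendsto (fun i => μ (t i)) l (𝓝 0)) (hu : Tendsto (fun i => μ (u i)) l (𝓝 0)) :
    Tendsto (fun i => μ (s i)) l (𝓝 0) :=
  tendsto_of_tendsto_of_tendsto_of_le_of_le tendsto_const_nhds (by simpa using ht.add hu)
    (fun _ => zero_le) (fun i => (measure_mono (h i)).trans (measure_union_le _ _))

theorem tendsto_measureReal_of_tendsto_measure_symmDiff [IsFiniteMeasure μ] {s t : ι → Set α}
    {c : ℝ} (hs : Tendsto (fun i => μ.real (s i)) l (𝓝 c))
    (hst : Tendsto (fun i => μ (s i ∆ t i)) l (𝓝 0)) :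
    Tendsto (fun i => μ.real (t i)) l (𝓝 c) := by
  -- the triangle inequality for `∆` through `⊥`, using `s ∆ ⊥ = s`
  have hbound : ∀ i, |μ.real (t i) - μ.real (s i)| ≤ μ.real (s i ∆ t i) := fun i => by
    have hts := measureReal_symmDiff_le (μ := μ) (s := t i) (t := s i) ⊥
    have hst := measureReal_symmDiff_le (μ := μ) (s := s i) (t := t i) ⊥
    rw [symmDiff_comm (t i) (s i)] at hts
    simp only [symmDiff_bot] at hts hst
    exact abs_sub_le_iff.2 ⟨by linarith, by linarith⟩
  have hdiff : Tendsto (fun i => μ.real (t i) - μ.real (s i)) l (𝓝 0) :=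
    squeeze_zero_norm hbound ((ENNReal.tendsto_toReal ENNReal.zero_ne_top).comp hst)
  simpa using hs.add hdiff

end MeasureTheory

theorem tendsto_of_tendsto_mul_of_tendsto_ne_zero {ι K : Type*} [NormedField K] {l : Filter ι}
    {a d : ι → K} {x z : K} (had : Tendsto (fun i => a i * d i) l (𝓝 x))
    (hd : Tendsto d l (𝓝 z)) (hz : z ≠ 0) : Tendsto a l (𝓝 (x / z)) :=
  (had.div hd hz).congr' <| (hd.eventually_ne hz).mono fun i hi => mul_div_cancel_right₀ (a i) hi

theorem stmt19_general {Ω : Type*} [MeasurableSpace Ω] (μ : Measure Ω) [IsProbabilityMeasure μ]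
    (θ : Ω → Ω) (hθ : MeasurePreserving θ μ μ)
    (B₁ B₂ : Set Ω) (hB₂ : MeasurableSet B₂)
    (C₁ C₂ D₁ D₂ : ℕ → Set Ω)
    (hind : ∀ n, μ (C₁ n ∩ C₂ n ∩ (D₁ n ∩ D₂ n)) * μ (D₁ n ∩ D₂ n)
        = μ (C₁ n ∩ (D₁ n ∩ D₂ n)) * μ (C₂ n ∩ (D₁ n ∩ D₂ n)))
    (hD : Tendsto (fun n => μ ((D₁ n)ᶜ ∪ (D₂ n)ᶜ)) atTop (nhds 0))
    (hC₁ : Tendsto (fun n => μ (B₁ ∆ C₁ n)) atTop (nhds 0))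
    (hC₂ : Tendsto (fun n => μ ((θ^[2 * n] ⁻¹' B₂) ∆ C₂ n)) atTop (nhds 0)) :
    Tendsto (fun n => μ (B₁ ∩ θ^[2 * n] ⁻¹' B₂)) atTop (nhds (μ B₁ * μ B₂)) := by
  set E := fun n => D₁ n ∩ D₂ n
  have hE : Tendsto (fun n => μ (E n)ᶜ) atTop (𝓝 0) := by simpa [E, Set.compl_inter] using hD
  have h₁ := tendsto_measure_zero_of_subset_union (fun n => Set.symmDiff_inter_subset _ _ _) hC₁ hE
  have h₂ := tendsto_measure_zero_of_subset_union (fun n => Set.symmDiff_inter_subset _ _ _) hC₂ hE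
  have hp : Tendsto (fun n => μ.real (C₁ n ∩ E n)) atTop (𝓝 (μ.real B₁)) :=
    tendsto_measureReal_of_tendsto_measure_symmDiff tendsto_const_nhds h₁
  have hq : Tendsto (fun n => μ.real (C₂ n ∩ E n)) atTop (𝓝 (μ.real B₂)) := by
    refine tendsto_measureReal_of_tendsto_measure_symmDiff (tendsto_const_nhds.congr fun n => ?_) h₂
    simp only [measureReal_def, (hθ.iterate (2 * n)).measure_preimage hB₂.nullMeasurableSet]
  have hd : Tendsto (fun n => μ.real (E n)) atTop (𝓝 1) :=
    tendsto_measureReal_of_tendsto_measure_symmDiff (s := fun _ => ⊤) (by simp)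
      (by simpa only [top_symmDiff, hnot_eq_compl] using hE)
  have ha : Tendsto (fun n => μ.real (C₁ n ∩ C₂ n ∩ E n)) atTop (𝓝 (μ.real B₁ * μ.real B₂)) := by
    have hmul : Tendsto (fun n => μ.real (C₁ n ∩ C₂ n ∩ E n) * μ.real (E n)) atTop
        (𝓝 (μ.real B₁ * μ.real B₂)) :=
      (hp.mul hq).congr fun n => by simp only [measureReal_def, ← ENNReal.toReal_mul, E, hind n]
    simpa using tendsto_of_tendsto_mul_of_tendsto_ne_zero hmul hd one_ne_zero
  have happrox : Tendsto (fun n => μ ((C₁ n ∩ C₂ n ∩ E n) ∆ (B₁ ∩ θ^[2 * n] ⁻¹' B₂))) atTop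
      (𝓝 0) := by
    refine tendsto_measure_zero_of_subset_union (fun n => ?_) h₁ h₂
    rw [symmDiff_comm, show C₁ n ∩ C₂ n ∩ E n = (C₁ n ∩ E n) ∩ (C₂ n ∩ E n) by
      rw [Set.inter_inter_distrib_right]]
    exact Set.inter_symmDiff_inter_subset _ _ _ _
  rw [← ENNReal.tendsto_toReal_iff (fun n => measure_ne_top μ _) (by finiteness),
    ENNReal.toReal_mul]
  exact tendsto_measureReal_of_tendsto_measure_symmDiff ha happrox

/-- Strong mixing of the stationary DLA under integer horizontal
translations. Let `θ` generate a measure-preserving ℤ-action, `B₁, B₂` cylinder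
events, and for each `n` let `C₁ n, C₂ n` be the approximating events (built from
Poisson processes in disjoint spatial regions for configurations at distance `> 2n`)
and `D₁ n, D₂ n` the confinement events. If `C₁ n` and `C₂ n` are independent
conditionally on `D₁ n ∩ D₂ n`, with `P(D₁ᶜ ∪ D₂ᶜ) → 0` and
`P(B₁ △ C₁ n) → 0`, `P(θ^{-2n} B₂ △ C₂ n) → 0`, then
`lim_n P(B₁ ∩ θ^{-2n} B₂) = P(B₁)·P(B₂)`, i.e. the process is strongly mixing
(hence ergodic) under integer horizontal translations. -/
theorem stmt19 {Ω : Type*} [MeasurableSpace Ω] (μ : Measure Ω) [IsProbabilityMeasure μ]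
    (θ : Ω → Ω) (hθ : MeasurePreserving θ μ μ)
    (B₁ B₂ : Set Ω) (hB₁ : MeasurableSet B₁) (hB₂ : MeasurableSet B₂)
    (C₁ C₂ D₁ D₂ : ℕ → Set Ω)
    (hmC₁ : ∀ n, MeasurableSet (C₁ n)) (hmC₂ : ∀ n, MeasurableSet (C₂ n))
    (hmD₁ : ∀ n, MeasurableSet (D₁ n)) (hmD₂ : ∀ n, MeasurableSet (D₂ n))
    (hind : ∀ n, μ (C₁ n ∩ C₂ n ∩ (D₁ n ∩ D₂ n)) * μ (D₁ n ∩ D₂ n)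
        = μ (C₁ n ∩ (D₁ n ∩ D₂ n)) * μ (C₂ n ∩ (D₁ n ∩ D₂ n)))
    (hD : Tendsto (fun n => μ ((D₁ n)ᶜ ∪ (D₂ n)ᶜ)) atTop (nhds 0))
    (hC₁ : Tendsto (fun n => μ (B₁ ∆ C₁ n)) atTop (nhds 0))
    (hC₂ : Tendsto (fun n => μ ((θ^[2 * n] ⁻¹' B₂) ∆ C₂ n)) atTop (nhds 0)) :
    Tendsto (fun n => μ (B₁ ∩ θ^[2 * n] ⁻¹' B₂)) atTop (nhds (μ B₁ * μ B₂)) :=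
  stmt19_general μ θ hθ B₁ B₂ hB₂ C₁ C₂ D₁ D₂ hind hD hC₁ hC₂
end
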